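/- arXiv:2302.12770 — 2 statements merged into one kernel-verified Lean document; each statement's English description precedes it below -/
import Mathlib

section
/- For b > b̄ (with b̄ defined as in Proposition 2), Λ(b) := -(β - b) + (b/(c+2b))(β/2 - b) > 0, and hence the TSO's objective term λ_b·Λ(b)·E[q̂²] is minimized over signalling policies by any signal independent of q, which yields E[q̂²] = (E[q])². -/
/-!
Completing the square, `b² - x b - d = (b - x/2)² - (x²/4 + d)`, so the quadratic is positive
beyond its larger root `x/2 + √(x²/4 + d)`; with `x = (3/2)β - c`, `d = βc` this quadratic is
`(c + 2b) Λ(b)`. Since `E[q̂] = E[q]`, Jensen gives `E[q̂²] ≥ (E[q])²` for every signal, and an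
independent signal makes `q̂` the constant `E[q]`.
-/

open MeasureTheory ProbabilityTheory

lemma quadratic_pos_of_larger_root_lt {x d b : ℝ}
    (h : (1/2) * x + Real.sqrt ((1/4) * x ^ 2 + d) < b) : 0 < b ^ 2 - x * b - d := by
  have := Real.lt_sq_of_sqrt_lt (show Real.sqrt ((1/4) * x ^ 2 + d) < b - (1/2) * x by linarith)
  nlinarith

lemma overpricing_margin_pos {b c β : ℝ} (hb : 0 < b) (hc : 0 < c)
    (hbb : (1/2) * ((3/2) * β - c) + Real.sqrt ((1/4) * ((3/2) * β - c) ^ 2 + β * c) < b) :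
    0 < -(β - b) + (b / (c + 2 * b)) * (β / 2 - b) := by
  have hd : 0 < c + 2 * b := by positivity
  have hquad := quadratic_pos_of_larger_root_lt hbb
  have heq : -(β - b) + (b / (c + 2 * b)) * (β / 2 - b)
      = (b ^ 2 - ((3/2) * β - c) * b - β * c) / (c + 2 * b) := by
    field_simp
    ring
  rw [heq]
  positivity

section Probability

variable {Ω : Type*} {m m₀ : MeasurableSpace Ω} {μ : Measure Ω} [IsProbabilityMeasure μ]

lemma sq_integral_le_integral_sq {f : Ω → ℝ} (hf : MemLp f 2 μ) :
    (∫ ω, f ω ∂μ) ^ 2 ≤ ∫ ω, f ω ^ 2 ∂μ := by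
  have := variance_nonneg f μ
  rw [variance_eq_sub hf] at this
  simp only [Pi.pow_apply] at this
  linarith

lemma sq_integral_le_integral_sq_condExp (hm : m ≤ m₀) {q : Ω → ℝ} (hq : MemLp q 2 μ) :
    (∫ ω, q ω ∂μ) ^ 2 ≤ ∫ ω, (μ[q | m]) ω ^ 2 ∂μ := by
  rw [← integral_condExp hm]
  exact sq_integral_le_integral_sq (hq.condExp one_le_two)

lemma integral_sq_condExp_comap_of_indepFun {E : Type*} [MeasurableSpace E]
    {q : Ω → ℝ} {qtilde : Ω → E} (hq : Measurable q) (hqtilde : Measurable qtilde)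
    (hind : IndepFun qtilde q μ) :
    ∫ ω, (μ[q | MeasurableSpace.comap qtilde inferInstance]) ω ^ 2 ∂μ = (∫ ω, q ω ∂μ) ^ 2 := by
  have hconst : μ[q | MeasurableSpace.comap qtilde inferInstance] =ᵐ[μ] fun _ => ∫ ω, q ω ∂μ :=
    condExp_indep_eq hq.comap_le hqtilde.comap_le
      (measurable_iff_comap_le.mpr le_rfl).stronglyMeasurable hind.symm
  rw [integral_congr_ae (hconst.mono fun _ h => congrArg (· ^ 2) h)]
  simp

end Probability

theorem no_information_optimal_when_overpriced_general
    (b c β : ℝ) (hb : 0 < b) (hc : 0 < c)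
    (hbb : (1/2) * ((3/2) * β - c)
        + Real.sqrt ((1/4) * ((3/2) * β - c) ^ 2 + β * c) < b)
    {Ω : Type*} [MeasurableSpace Ω] {μ : Measure Ω} [IsProbabilityMeasure μ]
    (q : Ω → ℝ) (hq : MemLp q 2 μ) (hqm : Measurable q) :
    0 < -(β - b) + (b / (c + 2 * b)) * (β / 2 - b) ∧
    (∀ (E : Type) [MeasurableSpace E] (qtilde : Ω → E), Measurable qtilde →
      (b / (c + 2 * b)) * (-(β - b) + (b / (c + 2 * b)) * (β / 2 - b)) *
          (∫ ω, q ω ∂μ) ^ 2 ≤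
        (b / (c + 2 * b)) * (-(β - b) + (b / (c + 2 * b)) * (β / 2 - b)) *
          ∫ ω, ((μ[q | MeasurableSpace.comap qtilde inferInstance]) ω) ^ 2 ∂μ) ∧
    (∀ (E : Type) [MeasurableSpace E] (qtilde : Ω → E), Measurable qtilde →
      IndepFun qtilde q μ →
        (∫ ω, ((μ[q | MeasurableSpace.comap qtilde inferInstance]) ω) ^ 2 ∂μ) =
          (∫ ω, q ω ∂μ) ^ 2) := by
  have hΛ := overpricing_margin_pos hb hc hbb
  refine ⟨hΛ, fun E _ qtilde hqtilde => ?_, fun E _ qtilde hqtilde hind => ?_⟩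
  · exact mul_le_mul_of_nonneg_left (sq_integral_le_integral_sq_condExp hqtilde.comap_le hq)
      (mul_nonneg (by positivity) hΛ.le)
  · exact integral_sq_condExp_comap_of_indepFun hqm hqtilde hind

/-- For `b > b̄`, `Λ(b) = -(β - b) + (b/(c+2b))(β/2 - b) > 0`; hence the TSO objective
term `λ_b Λ(b) E[q̂²]` is minimized, over signals `q̃`, by any signal independent of `q`,
in which case `E[q̂²] = (E[q])²`, the minimal possible value. -/
theorem no_information_optimal_when_overpriced
    (b c β : ℝ) (hb : 0 < b) (hc : 0 < c) (hβ : 0 < β)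
    (hbb : (1/2) * ((3/2) * β - c)
        + Real.sqrt ((1/4) * ((3/2) * β - c) ^ 2 + β * c) < b)
    {Ω : Type*} [MeasurableSpace Ω] {μ : Measure Ω} [IsProbabilityMeasure μ]
    (q : Ω → ℝ) (hq : MemLp q 2 μ) (hqm : Measurable q) :
    0 < -(β - b) + (b / (c + 2 * b)) * (β / 2 - b) ∧
    (∀ (E : Type) [MeasurableSpace E] (qtilde : Ω → E), Measurable qtilde →
      (b / (c + 2 * b)) * (-(β - b) + (b / (c + 2 * b)) * (β / 2 - b)) *
          (∫ ω, q ω ∂μ) ^ 2 ≤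
        (b / (c + 2 * b)) * (-(β - b) + (b / (c + 2 * b)) * (β / 2 - b)) *
          ∫ ω, ((μ[q | MeasurableSpace.comap qtilde inferInstance]) ω) ^ 2 ∂μ) ∧
    (∀ (E : Type) [MeasurableSpace E] (qtilde : Ω → E), Measurable qtilde →
      IndepFun qtilde q μ →
        (∫ ω, ((μ[q | MeasurableSpace.comap qtilde inferInstance]) ω) ^ 2 ∂μ) =
          (∫ ω, q ω ∂μ) ^ 2) :=
  no_information_optimal_when_overpriced_general b c β hb hc hbb q hq hqm
end

section
/- With f, f̂ as above, both strictly increasing and continuous on (β/2, ∞), negative at β/2 and tending to +∞, each has a unique zero b*₁ and b*ₙ respectively, and b*₁ ≤ b*ₙ. That is, the truth-telling threshold for n heterogeneous consumers with costs (cᵢ) is at least the threshold for one representative consumer with cost c̄ = (1/n)Σcᵢ. -/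
open Finset Filter

/-- Single-consumer criterion `f(b) = λ_b(β/2 - b) + b - β`, `λ_b = b/(c̄ + 2b)`. -/
noncomputable def fSingle (β cbar b : ℝ) : ℝ :=
  (b / (cbar + 2 * b)) * (β / 2 - b) + b - β

/-- Multi-consumer criterion `f̂(b) = λ̂_b(β/2 - b) + b - β`, `λ̂_b = ĉ/(1 + ĉ)`,
`ĉ = (1/n)Σᵢ b/(b + cᵢ)`. -/
noncomputable def fMulti (n : ℕ) (β : ℝ) (c : Fin n → ℝ) (b : ℝ) : ℝ :=
  (((1 / (n : ℝ)) * ∑ i, b / (b + c i)) / (1 + (1 / (n : ℝ)) * ∑ i, b / (b + c i)))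
      * (β / 2 - b) + b - β

/-!
With `ĉ(b)` the mean share `(1/n) Σ b/(b + cᵢ)`, one has `f̂(b) = (b - β/2)/(1 + ĉ(b)) - β/2`,
and `f` is the same expression for a single consumer of cost `c̄`. As `ĉ` is increasing
while `ĉ(b)/b` decreases, `f̂` is strictly increasing on `(β/2, ∞)`; `0 ≤ ĉ ≤ 1` makes it grow
at least like `b/2`. Jensen's inequality for `x ↦ x⁻¹` at the points `b + cᵢ` gives
`b/(b + c̄) ≤ ĉ(b)`, hence `f̂ ≤ f` there, so `f̂(b*₁) ≤ f(b*₁) = 0 = f̂(b*ₙ)` and `b*₁ ≤ b*ₙ`.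
-/

open Set

structure RisesThroughZero (f : ℝ → ℝ) (a : ℝ) : Prop where
  strictMonoOn : StrictMonoOn f (Ioi a)
  continuousOn : ContinuousOn f (Ici a)
  neg : f a < 0
  tendsto : Tendsto f atTop atTop

namespace RisesThroughZero

variable {f g : ℝ → ℝ} {a : ℝ}

theorem existsUnique_zero (hf : RisesThroughZero f a) : ∃! b, b ∈ Ioi a ∧ f b = 0 := by
  obtain ⟨B, hfB, haB⟩ :=
    ((hf.tendsto.eventually_gt_atTop 0).and (eventually_gt_atTop a)).exists
  obtain ⟨b, hb, hfb⟩ :=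
    intermediate_value_Ioo haB.le (hf.continuousOn.mono Icc_subset_Ici_self) ⟨hf.neg, hfB⟩
  exact ⟨b, ⟨hb.1, hfb⟩, fun y hy => hf.strictMonoOn.injOn hy.1 hb.1 (hy.2.trans hfb.symm)⟩

theorem congr (hf : RisesThroughZero f a) (hfg : EqOn f g (Ici a)) : RisesThroughZero g a where
  strictMonoOn := hf.strictMonoOn.congr (hfg.mono Ioi_subset_Ici_self)
  continuousOn := hf.continuousOn.congr hfg.symm
  neg := hfg self_mem_Ici ▸ hf.neg
  tendsto := hf.tendsto.congr' (hfg.eventuallyEq_of_mem (Ici_mem_atTop a))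

end RisesThroughZero

theorem strictMonoOn_sub_div_one_add {s : ℝ → ℝ} {a : ℝ} (ha : 0 ≤ a)
    (hs₀ : ∀ x ∈ Ioi a, 0 ≤ s x) (hs : MonotoneOn s (Ioi a))
    (hs_div : ∀ x ∈ Ioi a, ∀ y ∈ Ioi a, x ≤ y → x * s y ≤ y * s x) :
    StrictMonoOn (fun x => (x - a) / (1 + s x)) (Ioi a) := by
  intro x hx y hy hxy
  have hsx := hs₀ x hx
  have hsy := hs₀ y hy
  rw [div_lt_div_iff₀ (by linarith) (by linarith)]
  have h₁ := hs_div x hx y hy hxy.le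
  have h₂ := mul_le_mul_of_nonneg_left (hs hx hy hxy.le) ha
  nlinarith

section meanShare

variable {n : ℕ} {c : Fin n → ℝ} {b : ℝ}

/-- The paper's `ĉ`. -/
noncomputable def meanShare (c : Fin n → ℝ) (b : ℝ) : ℝ := (1 / (n : ℝ)) * ∑ i, b / (b + c i)

theorem mean_pos (hn : n ≠ 0) (hc : ∀ i, 0 < c i) : 0 < (1 / (n : ℝ)) * ∑ i, c i :=
  have : Nonempty (Fin n) := ⟨⟨0, Nat.pos_of_ne_zero hn⟩⟩
  mul_pos (by positivity) (sum_pos (fun i _ => hc i) univ_nonempty)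

theorem meanShare_const (a : ℝ) : meanShare (fun _ : Fin 1 => a) b = b / (b + a) := by
  simp [meanShare]

theorem meanShare_nonneg (hc : ∀ i, 0 < c i) (hb : 0 ≤ b) : 0 ≤ meanShare c b :=
  mul_nonneg (by positivity) (sum_nonneg fun i _ => div_nonneg hb (by linarith [hc i]))

theorem meanShare_le_one (hc : ∀ i, 0 < c i) (hb : 0 ≤ b) : meanShare c b ≤ 1 := by
  have hsum : ∑ i, b / (b + c i) ≤ ∑ _i : Fin n, (1 : ℝ) :=
    sum_le_sum fun i _ => div_le_one_of_le₀ (by linarith [hc i]) (by linarith [hc i])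
  rw [sum_const, card_univ, Fintype.card_fin, nsmul_one] at hsum
  rw [meanShare, one_div_mul_eq_div]
  exact div_le_one_of_le₀ hsum (Nat.cast_nonneg n)

theorem monotoneOn_meanShare (hc : ∀ i, 0 < c i) : MonotoneOn (meanShare c) (Ici 0) := by
  intro x hx y hy hxy
  refine mul_le_mul_of_nonneg_left (sum_le_sum fun i _ => ?_) (by positivity)
  have := hc i
  rw [div_le_div_iff₀ (by linarith [mem_Ici.1 hx]) (by linarith [mem_Ici.1 hy])]
  nlinarith

theorem mul_meanShare_le (hc : ∀ i, 0 < c i) {x y : ℝ} (hx : 0 ≤ x) (hxy : x ≤ y) :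
    x * meanShare c y ≤ y * meanShare c x := by
  have hterm (i : Fin n) : x * (y / (y + c i)) ≤ y * (x / (x + c i)) := by
    rw [mul_div_assoc', mul_div_assoc', mul_comm y x]
    exact div_le_div_of_nonneg_left (mul_nonneg hx (hx.trans hxy)) (by linarith [hc i])
      (by linarith)
  rw [meanShare, meanShare, mul_left_comm, mul_left_comm y, mul_sum univ _ x, mul_sum univ _ y]
  gcongr 1 / (n : ℝ) * ?_
  exact sum_le_sum fun i _ => hterm i

theorem continuousOn_meanShare (hc : ∀ i, 0 < c i) : ContinuousOn (meanShare c) (Ici 0) :=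
  continuousOn_const.mul <| continuousOn_finsetSum _ fun i _ =>
    continuousOn_id.div (continuousOn_id.add continuousOn_const) fun x hx =>
      (by linarith [hc i, mem_Ici.1 hx] : x + c i ≠ 0)

/-- Jensen's inequality for the convex map `x ↦ x⁻¹`, applied to the numbers `b + cᵢ`. -/
theorem div_add_mean_le_meanShare (hn : n ≠ 0) (hc : ∀ i, 0 < c i) (hb : 0 ≤ b) :
    b / (b + (1 / (n : ℝ)) * ∑ i, c i) ≤ meanShare c b := by
  have hjensen := (convexOn_zpow (𝕜 := ℝ) (-1)).map_sum_le (t := Finset.univ)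
    (w := fun _ => 1 / (n : ℝ)) (p := fun i => b + c i) (fun _ _ => by positivity) (by simp [hn])
    (fun i _ => mem_Ioi.2 (by linarith [hc i]))
  simp only [zpow_neg_one, smul_eq_mul, ← mul_sum, sum_add_distrib, sum_const, card_univ,
    Fintype.card_fin, nsmul_eq_mul] at hjensen
  have hmean : 1 / (n : ℝ) * (n * b + ∑ i, c i) = b + 1 / (n : ℝ) * ∑ i, c i := by
    field_simp
  calc b / (b + (1 / (n : ℝ)) * ∑ i, c i) = b * (1 / (n : ℝ) * (n * b + ∑ i, c i))⁻¹ := by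
        rw [hmean, div_eq_mul_inv]
    _ ≤ b * (1 / (n : ℝ) * ∑ i, (b + c i)⁻¹) := mul_le_mul_of_nonneg_left hjensen hb
    _ = meanShare c b := by simp only [meanShare, mul_sum, div_eq_mul_inv]; ring_nf

end meanShare

section criteria

variable {n : ℕ} {β : ℝ} {c : Fin n → ℝ} {b : ℝ}

theorem fMulti_eq (hc : ∀ i, 0 < c i) (hb : 0 ≤ b) :
    fMulti n β c b = (b - β / 2) / (1 + meanShare c b) - β / 2 := by
  have hS := meanShare_nonneg hc hb
  change meanShare c b / (1 + meanShare c b) * (β / 2 - b) + b - β = _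
  field_simp
  ring

theorem risesThroughZero_fMulti (hβ : 0 < β) (hc : ∀ i, 0 < c i) :
    RisesThroughZero (fMulti n β c) (β / 2) where
  strictMonoOn := by
    have hIoi : Ioi (β / 2) ⊆ Ici 0 := Ioi_subset_Ici (by positivity)
    have hmono := strictMonoOn_sub_div_one_add (half_pos hβ).le
      (fun x hx => meanShare_nonneg hc (hIoi hx)) ((monotoneOn_meanShare hc).mono hIoi)
      (fun x hx _ _ hxy => mul_meanShare_le hc (hIoi hx) hxy)
    intro x hx y hy hxy
    rw [fMulti_eq hc (hIoi hx), fMulti_eq hc (hIoi hy)]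
    exact sub_lt_sub_right (hmono hx hy hxy) _
  continuousOn := by
    have hS := (continuousOn_meanShare hc).mono (Ici_subset_Ici.2 (half_pos hβ).le)
    have hden : ∀ x ∈ Ici (β / 2), 1 + meanShare c x ≠ 0 := fun x hx =>
      (by linarith [meanShare_nonneg hc ((half_pos hβ).le.trans hx)] : 0 < 1 + meanShare c x).ne'
    exact (((hS.div (continuousOn_const.add hS) hden).mul
      (continuousOn_const.sub continuousOn_id)).add continuousOn_id).sub continuousOn_const
  neg := by
    rw [fMulti, sub_self, mul_zero, zero_add]
    linarith
  tendsto := by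
    have hlin : Tendsto (fun x : ℝ => x / 2 - 3 * β / 4) atTop atTop := by
      simpa only [sub_eq_add_neg, id] using
        tendsto_atTop_add_const_right _ (-(3 * β / 4)) (tendsto_id.atTop_div_const two_pos)
    refine tendsto_atTop_mono' atTop ?_ hlin
    filter_upwards [eventually_ge_atTop (β / 2)] with x hx
    have hx₀ : 0 ≤ x := (half_pos hβ).le.trans hx
    have hS_le := meanShare_le_one hc hx₀
    have hhalf : (x - β / 2) / 2 ≤ (x - β / 2) / (1 + meanShare c x) :=
      div_le_div_of_nonneg_left (sub_nonneg.2 hx)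
        (by linarith [meanShare_nonneg hc hx₀]) (by linarith)
    rw [fMulti_eq hc hx₀]
    linarith

theorem fSingle_eqOn_fMulti {cbar : ℝ} (hcbar : 0 ≤ cbar) :
    EqOn (fSingle β cbar) (fMulti 1 β fun _ => cbar) (Ioi 0) := by
  intro x hx
  have hx₀ : 0 < x := hx
  have h₁ : x + cbar ≠ 0 := by positivity
  have h₂ : cbar + 2 * x ≠ 0 := by positivity
  simp only [fSingle, fMulti, Nat.cast_one, div_one, one_mul, Fin.sum_univ_one]
  field_simp
  ring

theorem risesThroughZero_fSingle (hβ : 0 < β) {cbar : ℝ} (hcbar : 0 < cbar) :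
    RisesThroughZero (fSingle β cbar) (β / 2) :=
  (risesThroughZero_fMulti hβ fun _ => hcbar).congr
    ((fSingle_eqOn_fMulti hcbar.le).symm.mono (Ici_subset_Ioi.2 (half_pos hβ)))

theorem fMulti_le_fSingle (hn : n ≠ 0) (hβ : 0 ≤ β) (hc : ∀ i, 0 < c i) (hb : β / 2 < b) :
    fMulti n β c b ≤ fSingle β ((1 / (n : ℝ)) * ∑ i, c i) b := by
  have hb₀ : 0 < b := (by positivity : 0 ≤ β / 2).trans_lt hb
  have hcbar := mean_pos hn hc
  have hjensen := div_add_mean_le_meanShare hn hc hb₀.le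
  rw [← meanShare_const] at hjensen
  have hS₁ := meanShare_nonneg (fun _ : Fin 1 => hcbar) hb₀.le
  rw [fSingle_eqOn_fMulti hcbar.le hb₀, fMulti_eq hc hb₀.le, fMulti_eq (fun _ => hcbar) hb₀.le]
  exact sub_le_sub_right (div_le_div_of_nonneg_left (by linarith) (by linarith) (by linarith)) _

end criteria

/-- Both `f` and `f̂` are strictly increasing and continuous on `(β/2, ∞)`, negative at
`β/2` and tending to `+∞`; each has a unique zero there, and the zero `b*₁` of `f` is at
most the zero `b*ₙ` of `f̂`: a population of `n` heterogeneous consumers is less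
vulnerable to misinformation than a single representative consumer with cost `c̄`. -/
theorem threshold_single_le_multi (n : ℕ) (hn : 1 ≤ n) (β : ℝ) (hβ : 0 < β)
    (c : Fin n → ℝ) (hc : ∀ i, 0 < c i) :
    StrictMonoOn (fSingle β ((1 / (n : ℝ)) * ∑ i, c i)) (Set.Ioi (β / 2)) ∧
    StrictMonoOn (fMulti n β c) (Set.Ioi (β / 2)) ∧
    ContinuousOn (fSingle β ((1 / (n : ℝ)) * ∑ i, c i)) (Set.Ioi (β / 2)) ∧
    ContinuousOn (fMulti n β c) (Set.Ioi (β / 2)) ∧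
    fSingle β ((1 / (n : ℝ)) * ∑ i, c i) (β / 2) < 0 ∧
    fMulti n β c (β / 2) < 0 ∧
    Tendsto (fSingle β ((1 / (n : ℝ)) * ∑ i, c i)) atTop atTop ∧
    Tendsto (fMulti n β c) atTop atTop ∧
    (∃! b : ℝ, b ∈ Set.Ioi (β / 2) ∧ fSingle β ((1 / (n : ℝ)) * ∑ i, c i) b = 0) ∧
    (∃! b : ℝ, b ∈ Set.Ioi (β / 2) ∧ fMulti n β c b = 0) ∧
    (∀ b₁ bₙ : ℝ, b₁ ∈ Set.Ioi (β / 2) → fSingle β ((1 / (n : ℝ)) * ∑ i, c i) b₁ = 0 →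
      bₙ ∈ Set.Ioi (β / 2) → fMulti n β c bₙ = 0 → b₁ ≤ bₙ) := by
  have hn₀ : n ≠ 0 := Nat.one_le_iff_ne_zero.1 hn
  have hS := risesThroughZero_fSingle hβ (mean_pos hn₀ hc)
  have hM := risesThroughZero_fMulti hβ hc
  refine ⟨hS.strictMonoOn, hM.strictMonoOn, hS.continuousOn.mono Ioi_subset_Ici_self,
    hM.continuousOn.mono Ioi_subset_Ici_self, hS.neg, hM.neg, hS.tendsto, hM.tendsto,
    hS.existsUnique_zero, hM.existsUnique_zero, fun b₁ bₙ hb₁ hf₁ hbₙ hfₙ => ?_⟩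
  refine (hM.strictMonoOn.le_iff_le hb₁ hbₙ).1 ?_
  rw [hfₙ, ← hf₁]
  exact fMulti_le_fSingle hn₀ hβ.le hc hb₁
end
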